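/- arXiv:2506.11232 — 2 statements merged into one kernel-verified Lean document; each statement's English description precedes it below -/
import Mathlib

section
/- Let G be a symmetric p×p real matrix, B a p×p real matrix, q, v ∈ ℝᵖ, and ρ > 0. Define L(s) = ½‖G − (Bq)sᵀ‖_F² + ⟨v, s − Bq⟩ + (ρ/2)‖s − Bq‖₂², and let c = G(Bq) + ρ(Bq) − v. Then for every unit vector s (‖s‖₂ = 1), L(s) = −⟨s, c⟩ + C, where C does not depend on s. Consequently, if c ≠ 0, then s* = c/‖c‖₂ is the unique minimizer of L over the unit sphere {s ∈ ℝᵖ : ‖s‖₂ = 1}. -/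
open Matrix

/-- The augmented-Lagrangian objective of the `s`-update of the ADMM algorithm:
`L(s) = ½‖G − (Bq)sᵀ‖_F² + ⟨v, s − Bq⟩ + (ρ/2)‖s − Bq‖₂²`. -/
noncomputable def admmL {p : ℕ} (G B : Matrix (Fin p) (Fin p) ℝ)
    (q v : Fin p → ℝ) (ρ : ℝ) (s : Fin p → ℝ) : ℝ :=
  (1 / 2) * (∑ a, ∑ b, ((G - vecMulVec (B.mulVec q) s) a b) ^ 2)
    + v ⬝ᵥ (s - B.mulVec q)
    + (ρ / 2) * ((s - B.mulVec q) ⬝ᵥ (s - B.mulVec q))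

/-- The vector `c = G(Bq) + ρ(Bq) − v` of the ADMM `s`-update. -/
def admmC {p : ℕ} (G B : Matrix (Fin p) (Fin p) ℝ)
    (q v : Fin p → ℝ) (ρ : ℝ) : Fin p → ℝ :=
  G.mulVec (B.mulVec q) + ρ • B.mulVec q - v

lemma admm_expand {p : ℕ} (G B : Matrix (Fin p) (Fin p) ℝ) (hG : Gᵀ = G)
    (q v : Fin p → ℝ) (ρ : ℝ) (s : Fin p → ℝ) :
    admmL G B q v ρ s =
      (1/2) * (∑ a, ∑ b, (G a b)^2)
      + (1/2) * ((B.mulVec q ⬝ᵥ B.mulVec q) * (s ⬝ᵥ s))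
      - s ⬝ᵥ G.mulVec (B.mulVec q)
      + v ⬝ᵥ s - v ⬝ᵥ B.mulVec q
      + (ρ/2) * (s ⬝ᵥ s) - ρ * (s ⬝ᵥ B.mulVec q)
      + (ρ/2) * (B.mulVec q ⬝ᵥ B.mulVec q) := by
  set u := B.mulVec q with hu
  have hsym : ∀ a b, G a b = G b a := by
    intro a b
    have h := congrFun (congrFun hG a) b
    simpa using h.symm
  have hgs : ∑ a, ∑ b, G a b * u a * s b = s ⬝ᵥ G.mulVec u := by
    rw [Finset.sum_comm]
    simp only [dotProduct, mulVec, Finset.mul_sum]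
    exact Finset.sum_congr rfl fun b _ => Finset.sum_congr rfl fun a _ => by
      rw [hsym a b]; ring
  have h1 : ∑ a, ∑ b, ((G - vecMulVec u s) a b)^2
      = (∑ a, ∑ b, (G a b)^2) - 2 * (s ⬝ᵥ G.mulVec u) + (u ⬝ᵥ u) * (s ⬝ᵥ s) := by
    calc ∑ a, ∑ b, ((G - vecMulVec u s) a b)^2
        = ∑ a, ∑ b, ((G a b)^2 - 2 * (G a b * u a * s b) + (u a * u a) * (s b * s b)) := by
          refine Finset.sum_congr rfl fun a _ => Finset.sum_congr rfl fun b _ => ?_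
          simp only [Matrix.sub_apply, vecMulVec_apply]
          ring
      _ = (∑ a, ∑ b, (G a b)^2) - 2 * (∑ a, ∑ b, G a b * u a * s b)
            + (∑ a, u a * u a) * (∑ b, s b * s b) := by
          rw [Finset.sum_mul_sum, Finset.mul_sum, ← Finset.sum_sub_distrib,
            ← Finset.sum_add_distrib]
          refine Finset.sum_congr rfl fun a _ => ?_
          rw [Finset.mul_sum, ← Finset.sum_sub_distrib, ← Finset.sum_add_distrib]
      _ = (∑ a, ∑ b, (G a b)^2) - 2 * (s ⬝ᵥ G.mulVec u) + (u ⬝ᵥ u) * (s ⬝ᵥ s) := by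
          rw [← hgs]
          rfl
  have h2 : v ⬝ᵥ (s - u) = v ⬝ᵥ s - v ⬝ᵥ u := dotProduct_sub v s u
  have h3 : (s - u) ⬝ᵥ (s - u) = s ⬝ᵥ s - 2 * (s ⬝ᵥ u) + u ⬝ᵥ u := by
    rw [dotProduct_sub, sub_dotProduct, sub_dotProduct, dotProduct_comm u s]
    ring
  unfold admmL
  rw [← hu, h1, h2, h3]
  ring

/-- On the unit sphere, the ADMM `s`-update objective satisfies
`L(s) = −⟨s, c⟩ + C` with `C` independent of `s`; consequently, if `c ≠ 0` then
`s* = c/‖c‖₂` is the unique minimizer of `L` over the unit sphere. -/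
theorem stmt_10 {p : ℕ} (G B : Matrix (Fin p) (Fin p) ℝ) (hG : Gᵀ = G)
    (q v : Fin p → ℝ) (ρ : ℝ) (hρ : 0 < ρ) :
    (∃ C : ℝ, ∀ s : Fin p → ℝ, Real.sqrt (s ⬝ᵥ s) = 1 →
      admmL G B q v ρ s = -(s ⬝ᵥ admmC G B q v ρ) + C) ∧
    (admmC G B q v ρ ≠ 0 →
      (∀ s : Fin p → ℝ, Real.sqrt (s ⬝ᵥ s) = 1 →
        admmL G B q v ρ
          ((Real.sqrt (admmC G B q v ρ ⬝ᵥ admmC G B q v ρ))⁻¹ • admmC G B q v ρ)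
          ≤ admmL G B q v ρ s) ∧
      (∀ s : Fin p → ℝ, Real.sqrt (s ⬝ᵥ s) = 1 →
        admmL G B q v ρ s =
          admmL G B q v ρ
            ((Real.sqrt (admmC G B q v ρ ⬝ᵥ admmC G B q v ρ))⁻¹ • admmC G B q v ρ) →
        s = (Real.sqrt (admmC G B q v ρ ⬝ᵥ admmC G B q v ρ))⁻¹ • admmC G B q v ρ)) := by
  have hnn : ∀ w : Fin p → ℝ, (0:ℝ) ≤ w ⬝ᵥ w :=
    fun w => Finset.sum_nonneg fun i _ => mul_self_nonneg _
  have unit : ∀ s : Fin p → ℝ, Real.sqrt (s ⬝ᵥ s) = 1 → s ⬝ᵥ s = 1 := by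
    intro s h
    have h2 := congrArg (· ^ 2) h
    simpa [Real.sq_sqrt (hnn s)] using h2
  set u := B.mulVec q with hu
  set c := admmC G B q v ρ with hc
  have hcd : c = G.mulVec u + ρ • u - v := rfl
  have hsc : ∀ s : Fin p → ℝ, s ⬝ᵥ c = s ⬝ᵥ G.mulVec u + ρ * (s ⬝ᵥ u) - v ⬝ᵥ s := by
    intro s
    rw [hcd, dotProduct_sub, dotProduct_add, dotProduct_smul, smul_eq_mul,
      dotProduct_comm s v]
  set C0 : ℝ := (1/2) * (∑ a, ∑ b, (G a b)^2) + (1/2) * (u ⬝ᵥ u) - v ⬝ᵥ u + ρ/2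
      + (ρ/2) * (u ⬝ᵥ u) with hC0
  have key : ∀ s : Fin p → ℝ, s ⬝ᵥ s = 1 →
      admmL G B q v ρ s = -(s ⬝ᵥ c) + C0 := by
    intro s hs
    rw [admm_expand G B hG q v ρ s, hsc s, hs, hC0]
    ring
  refine ⟨⟨C0, fun s hs => key s (unit s hs)⟩, ?_⟩
  intro hc0
  have hcc : 0 < c ⬝ᵥ c :=
    lt_of_le_of_ne (hnn c) fun h => hc0 (dotProduct_self_eq_zero.mp h.symm)
  set nc := Real.sqrt (c ⬝ᵥ c) with hnc
  have hncpos : 0 < nc := Real.sqrt_pos.mpr hcc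
  have hnc2 : nc ^ 2 = c ⬝ᵥ c := Real.sq_sqrt (hnn c)
  set sstar : Fin p → ℝ := nc⁻¹ • c with hsstar
  have hstar_c : sstar ⬝ᵥ c = nc := by
    rw [hsstar, smul_dotProduct, smul_eq_mul, ← hnc2]
    field_simp
  have hstar_dot : sstar ⬝ᵥ sstar = 1 := by
    rw [hsstar, smul_dotProduct, dotProduct_smul, smul_eq_mul, smul_eq_mul, ← hnc2]
    field_simp
  have CS : ∀ s : Fin p → ℝ, s ⬝ᵥ s = 1 → s ⬝ᵥ c ≤ nc := by
    intro s hs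
    have h2 : (s ⬝ᵥ c) ^ 2 ≤ (s ⬝ᵥ s) * (c ⬝ᵥ c) := by
      have := Finset.sum_mul_sq_le_sq_mul_sq Finset.univ s c
      simpa [dotProduct, sq] using this
    rw [hs, one_mul, ← hnc2] at h2
    calc s ⬝ᵥ c ≤ |s ⬝ᵥ c| := le_abs_self _
      _ = Real.sqrt ((s ⬝ᵥ c) ^ 2) := (Real.sqrt_sq_eq_abs _).symm
      _ ≤ Real.sqrt (nc ^ 2) := Real.sqrt_le_sqrt h2
      _ = nc := Real.sqrt_sq hncpos.le
  have hLstar : admmL G B q v ρ sstar = -nc + C0 := by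
    rw [key sstar hstar_dot, hstar_c]
  constructor
  · intro s hs
    have hs1 := unit s hs
    rw [key s hs1, hLstar]
    have := CS s hs1
    linarith
  · intro s hs hEq
    have hs1 := unit s hs
    rw [key s hs1, hLstar] at hEq
    have hsceq : s ⬝ᵥ c = nc := by linarith
    have hssstar : s ⬝ᵥ sstar = 1 := by
      rw [hsstar, dotProduct_smul, smul_eq_mul, hsceq]
      field_simp
    have hzero : (s - sstar) ⬝ᵥ (s - sstar) = 0 := by
      rw [dotProduct_sub, sub_dotProduct, sub_dotProduct, dotProduct_comm sstar s,
        hs1, hssstar, hstar_dot]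
      ring
    have := dotProduct_self_eq_zero.mp hzero
    exact sub_eq_zero.mp this
end

section
/- Let q ∈ ℝᵖ and let S be a p×k real matrix with at least one nonzero entry. Suppose every column of S has support contained in the support of q; that is, for every index l with q_l = 0 and every j, the (l,j)-entry of S is 0. Then there exists v ∈ ℝᵏ such that the support of q − Sv is a proper subset of the support of q; in particular, q − Sv has strictly fewer nonzero entries than q. -/
open Matrix

/-- If `S` is a nonzero `p × k` real matrix each of whose columns has support
contained in the support of `q ∈ ℝᵖ`, then there exists `v ∈ ℝᵏ` such that the
support of `q − Sv` is a proper subset of the support of `q`; in particular,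
`q − Sv` has strictly fewer nonzero entries than `q`. -/
theorem stmt_13 {p k : ℕ} (q : Fin p → ℝ) (S : Matrix (Fin p) (Fin k) ℝ)
    (hS : S ≠ 0) (hsupp : ∀ l j, q l = 0 → S l j = 0) :
    ∃ v : Fin k → ℝ,
      Function.support (q - S.mulVec v) ⊂ Function.support q ∧
      (Function.support (q - S.mulVec v)).ncard < (Function.support q).ncard := by
  -- pick a nonzero entry S i j
  have hex : ∃ i j, S i j ≠ 0 := by
    by_contra h
    push_neg at h
    exact hS (by ext i j; simp [h i j])
  obtain ⟨i, j, hij⟩ := hex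
  have hqi : q i ≠ 0 := fun h => hij (hsupp i j h)
  refine ⟨fun j' => if j' = j then q i / S i j else 0, ?_, ?_⟩
  · have hmv : ∀ l, S.mulVec (fun j' => if j' = j then q i / S i j else 0) l
        = S l j * (q i / S i j) := by
      intro l
      simp [Matrix.mulVec, dotProduct, mul_ite, Finset.sum_ite_eq']
    constructor
    · intro l hl
      simp only [Function.mem_support, Pi.sub_apply, hmv] at hl ⊢
      intro hq
      apply hl
      rw [hq, hsupp l j hq]
      ring
    · intro hsub
      have := hsub (Function.mem_support.2 hqi)
      simp only [Function.mem_support, Pi.sub_apply, hmv] at this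
      apply this
      field_simp
      ring
  · apply Set.ncard_lt_ncard
    · constructor
      · intro l hl
        simp only [Function.mem_support, Pi.sub_apply] at hl ⊢
        intro hq
        apply hl
        have : ∀ j', S l j' = 0 := fun j' => hsupp l j' hq
        simp [Matrix.mulVec, dotProduct, this, hq]
      · intro hsub
        have := hsub (Function.mem_support.2 hqi)
        simp only [Function.mem_support, Pi.sub_apply, Matrix.mulVec, dotProduct,
          mul_ite, Finset.sum_ite_eq'] at this
        apply this
        field_simp
        simp [hij]
    · exact Set.toFinite _
end
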